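/- Let f₁,…,f_r: ℂⁿ → ℂ, ε > 0, δ > 0 with ξ = δ/ε. Define F(x,y) = Σᵢ yᵢfᵢ(x) and let M = {(x,y) : ‖x‖ ≤ ε, |yᵢ| ≤ ε ∀i, F(x,y) = δ}. Then the image of M under the projection π(x,y) = x equals {x : ‖x‖ ≤ ε, Σᵢ |fᵢ(x)| ≥ ξ}. -/

import Mathlib

/-!
A point `x` lies in the projection iff some `y` in the polydisc of radius `ε` gives
`∑ yᵢ fᵢ(x) = δ`. The triangle inequality bounds `|∑ yᵢ fᵢ(x)|` by `ε ∑ |fᵢ(x)|`, and conversely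
`yᵢ = c · conj fᵢ(x) / |fᵢ(x)|` turns every term into the nonnegative real `c |fᵢ(x)|`; so the
fibre over `x` is nonempty iff `δ ≤ ε ∑ |fᵢ(x)|`, i.e. `ξ ≤ ∑ |fᵢ(x)|`.
-/

open Finset ComplexConjugate

section PhaseSum

variable {𝕜 ι : Type*} [RCLike 𝕜] [Fintype ι]

lemma RCLike.conj_div_norm_mul_self (z : 𝕜) : conj z / ‖z‖ * z = ‖z‖ := by
  rcases eq_or_ne z 0 with rfl | hz
  · simp
  have hz' : (‖z‖ : 𝕜) ≠ 0 := by simpa using hz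
  rw [div_mul_eq_mul_div, RCLike.conj_mul, div_eq_iff hz']
  ring

lemma RCLike.norm_conj_div_norm_le_one (z : 𝕜) : ‖conj z / ‖z‖‖ ≤ 1 := by
  rw [norm_div, RCLike.norm_conj, RCLike.norm_ofReal, abs_norm]
  exact div_self_le_one _

lemma norm_sum_mul_le_mul_sum_norm {R : Type*} [SeminormedRing R] {a b : ι → R} {ε : ℝ}
    (ha : ∀ i, ‖a i‖ ≤ ε) : ‖∑ i, a i * b i‖ ≤ ε * ∑ i, ‖b i‖ :=
  calc ‖∑ i, a i * b i‖ ≤ ∑ i, ‖a i‖ * ‖b i‖ :=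
        (norm_sum_le _ _).trans (sum_le_sum fun i _ => norm_mul_le _ _)
    _ ≤ ε * ∑ i, ‖b i‖ := by
        rw [mul_sum]
        exact sum_le_sum fun i _ => mul_le_mul_of_nonneg_right (ha i) (norm_nonneg _)

lemma exists_norm_le_sum_mul_eq_iff {z : ι → 𝕜} {ε δ : ℝ} (hδ : 0 < δ) :
    (∃ y : ι → 𝕜, (∀ i, ‖y i‖ ≤ ε) ∧ ∑ i, y i * z i = δ) ↔ δ ≤ ε * ∑ i, ‖z i‖ := by
  constructor
  · rintro ⟨y, hy, hsum⟩
    simpa [hsum, abs_of_pos hδ] using norm_sum_mul_le_mul_sum_norm (b := z) hy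
  · intro hle
    have hs : 0 < ∑ i, ‖z i‖ := (sum_nonneg fun i _ => norm_nonneg (z i)).lt_of_ne' fun h0 => by
      rw [h0, mul_zero] at hle
      linarith
    set s := ∑ i, ‖z i‖
    refine ⟨fun i => (δ / s : ℝ) * (conj (z i) / ‖z i‖), fun i => ?_, ?_⟩
    · calc ‖(δ / s : ℝ) * (conj (z i) / ‖z i‖ : 𝕜)‖ ≤ δ / s * 1 := by
            rw [norm_mul, RCLike.norm_ofReal, abs_of_pos (div_pos hδ hs)]
            gcongr
            exact RCLike.norm_conj_div_norm_le_one _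
        _ ≤ ε := by rwa [mul_one, div_le_iff₀ hs]
    · simp_rw [mul_assoc, RCLike.conj_div_norm_mul_self, ← mul_sum]
      rw [← RCLike.ofReal_sum, ← RCLike.ofReal_mul, div_mul_cancel₀ _ hs.ne']

end PhaseSum

theorem stmt7 (n r : ℕ) (f : Fin r → EuclideanSpace ℂ (Fin n) → ℂ)
    (ε δ : ℝ) (hε : 0 < ε) (hδ : 0 < δ) (ξ : ℝ) (hξ : ξ = δ / ε) :
    (fun p : EuclideanSpace ℂ (Fin n) × (Fin r → ℂ) => p.1) ''
        {p : EuclideanSpace ℂ (Fin n) × (Fin r → ℂ) |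
          ‖p.1‖ ≤ ε ∧ (∀ i, ‖p.2 i‖ ≤ ε) ∧ ∑ i, p.2 i * f i p.1 = (δ : ℂ)} =
      {x : EuclideanSpace ℂ (Fin n) | ‖x‖ ≤ ε ∧ ξ ≤ ∑ i, ‖f i x‖} := by
  ext x
  have hfiber : (∃ y : Fin r → ℂ, (∀ i, ‖y i‖ ≤ ε) ∧ ∑ i, y i * f i x = δ) ↔
      ξ ≤ ∑ i, ‖f i x‖ := by
    refine (exists_norm_le_sum_mul_eq_iff hδ).trans ?_
    rw [hξ, div_le_iff₀ hε, mul_comm]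
  simp only [Set.mem_image, Set.mem_ofPred_eq, Prod.exists, ← hfiber]
  constructor
  · rintro ⟨_, y, ⟨hx, hy, hsum⟩, rfl⟩
    exact ⟨hx, y, hy, hsum⟩
  · rintro ⟨hx, y, hy, hsum⟩
    exact ⟨x, y, ⟨hx, hy, hsum⟩, rfl⟩
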